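/- Conditional GLS samples the target correctly: let A be a random variable taking values in a countable set, independent of the family {S_i^(k)}, and for each value a let q(·|a) be a probability mass function on {1,…,N} with q_j(a) > 0 for all j. Define Y = argmin_{1≤i≤N} min_{1≤k≤K} S_i^(k)/q_i(A). Then for every a with Pr[A = a] > 0 and every j ∈ {1,…,N}, Pr[Y = j | A = a] = q_j(a). -/

import Mathlib

/-!
`Y = j` exactly when the clock `T j = (min_k S j k) / q a j` rings first. The clocks are
independent, and `T i ~ Exp(K q_i)`: the minimum of `K` rate-one exponentials is `Exp(K)`, and
dividing by `q_i` multiplies the rate by `q_i`. In a race of independent exponential clocks,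
clock `j` wins with probability `rate j / ∑ rate = q_j`. Since `A` is independent of the
clocks, conditioning on `A = a` only fixes the weights `q a`.
-/

open MeasureTheory ProbabilityTheory Real Set Filter
open scoped ENNReal

lemma lt_ciInf_iff_of_finite {ι α : Type*} [Finite ι] [Nonempty ι]
    [ConditionallyCompleteLinearOrder α] {f : ι → α} {t : α} :
    t < ⨅ i, f i ↔ ∀ i, t < f i := by
  refine ⟨fun h i ↦ h.trans_le (ciInf_le (Finite.bddBelow_range f) i), fun h ↦ ?_⟩
  obtain ⟨i, hi⟩ := exists_eq_ciInf_of_finite (f := f)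
  exact hi ▸ h i

lemma measurableSet_setOf_forall_ne_lt {ι : Type*} [Countable ι] (j : ι) :
    MeasurableSet {z : ι → ℝ | ∀ i, i ≠ j → z j < z i} := by
  simp only [ofPred_forall]
  exact .iInter fun i ↦ .iInter fun _ ↦ measurableSet_lt (by fun_prop) (by fun_prop)

section Exponential

variable {r : ℝ}

lemma expMeasure_Ioi (hr : 0 < r) (t : ℝ) :
    expMeasure r (Ioi t) = ENNReal.ofReal (rexp (-(r * max t 0))) := by
  have := isProbabilityMeasure_expMeasure hr
  rw [← compl_Iic, prob_compl_eq_one_sub measurableSet_Iic, ← ofReal_cdf, cdf_expMeasure_eq hr]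
  rcases le_or_gt 0 t with ht | ht
  · rw [if_pos ht, max_eq_left ht, ← ENNReal.ofReal_one,
      ← ENNReal.ofReal_sub _ (sub_nonneg.2 (exp_le_one_iff.2 (by nlinarith)))]
    congr 1; ring
  · simp [if_neg (not_le.2 ht), max_eq_right ht.le]

lemma eq_expMeasure_of_measure_Ioi {ν : Measure ℝ} [IsProbabilityMeasure ν] (hr : 0 < r)
    (h : ∀ t, ν (Ioi t) = ENNReal.ofReal (rexp (-(r * max t 0)))) : ν = expMeasure r := by
  have := isProbabilityMeasure_expMeasure hr
  refine Measure.ext_of_Iic _ _ fun t ↦ ?_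
  rw [← compl_Ioi, prob_compl_eq_one_sub measurableSet_Ioi, prob_compl_eq_one_sub measurableSet_Ioi,
    h, expMeasure_Ioi hr]

lemma map_div_expMeasure {c : ℝ} (hr : 0 < r) (hc : 0 < c) :
    (expMeasure r).map (· / c) = expMeasure (r * c) := by
  have := isProbabilityMeasure_expMeasure hr
  have hmeas : Measurable fun x : ℝ ↦ x / c := measurable_id.div_const c
  have := Measure.isProbabilityMeasure_map (μ := expMeasure r) hmeas.aemeasurable
  refine eq_expMeasure_of_measure_Ioi (by positivity) fun t ↦ ?_
  have hpre : (· / c) ⁻¹' Ioi t = Ioi (c * t) := by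
    ext x; simp [lt_div_iff₀ hc, mul_comm]
  rw [Measure.map_apply hmeas measurableSet_Ioi, hpre, expMeasure_Ioi hr,
    mul_assoc, mul_max_of_nonneg _ _ hc.le, mul_zero]

variable {ι : Type*} [Fintype ι] {rate : ι → ℝ}

lemma prod_expMeasure_Ioi (hrate : ∀ i, 0 < rate i) (t : ℝ) :
    ∏ i, expMeasure (rate i) (Ioi t) = ENNReal.ofReal (rexp (-((∑ i, rate i) * max t 0))) := by
  simp only [expMeasure_Ioi (hrate _)]
  rw [← ENNReal.ofReal_prod_of_nonneg fun i _ ↦ (exp_pos _).le, ← exp_sum, Finset.sum_mul]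
  simp

lemma map_iInf_pi_expMeasure [Nonempty ι] (hrate : ∀ i, 0 < rate i) :
    (Measure.pi fun i ↦ expMeasure (rate i)).map (fun x ↦ ⨅ i, x i)
      = expMeasure (∑ i, rate i) := by
  have := fun i ↦ isProbabilityMeasure_expMeasure (hrate i)
  have hmeas : Measurable fun x : ι → ℝ ↦ ⨅ i, x i := .iInf fun i ↦ measurable_pi_apply i
  have := Measure.isProbabilityMeasure_map
    (μ := Measure.pi fun i ↦ expMeasure (rate i)) hmeas.aemeasurable
  refine eq_expMeasure_of_measure_Ioi (Finset.sum_pos (fun i _ ↦ hrate i) Finset.univ_nonempty)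
    fun t ↦ ?_
  have hpre : (fun x : ι → ℝ ↦ ⨅ i, x i) ⁻¹' Ioi t = univ.pi fun _ ↦ Ioi t := by
    ext x; simp [lt_ciInf_iff_of_finite]
  rw [Measure.map_apply hmeas measurableSet_Ioi, hpre, Measure.pi_pi, prod_expMeasure_Ioi hrate]

lemma lintegral_exp_neg_mul_expMeasure {b : ℝ} (hr : 0 < r) (hb : 0 ≤ b) :
    ∫⁻ t, ENNReal.ofReal (rexp (-(b * max t 0))) ∂expMeasure r
      = ENNReal.ofReal (r / (r + b)) := by
  have hrb : 0 < r + b := by linarith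
  -- `exp(-bt)` times the `Exp(r)` density is `r / (r + b)` times the `Exp(r + b)` density
  have hdensity : ∀ t, exponentialPDF r t * ENNReal.ofReal (rexp (-(b * max t 0)))
      = ENNReal.ofReal (r / (r + b)) * exponentialPDF (r + b) t := by
    intro t
    rcases le_or_gt 0 t with ht | ht
    · rw [exponentialPDF_of_nonneg ht, exponentialPDF_of_nonneg ht, max_eq_left ht,
        ← ENNReal.ofReal_mul (by positivity), ← ENNReal.ofReal_mul (by positivity)]
      congr 1
      rw [mul_assoc, ← exp_add, div_mul_eq_mul_div, mul_div_assoc, mul_div_cancel_left₀ _ hrb.ne']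
      ring_nf
    · simp [exponentialPDF_of_neg ht]
  have hg : Measurable fun t : ℝ ↦ ENNReal.ofReal (rexp (-(b * max t 0))) := by fun_prop
  have hpdf (s : ℝ) : Measurable (exponentialPDF s) :=
    (measurable_exponentialPDFReal s).ennreal_ofReal
  rw [show expMeasure r = volume.withDensity (exponentialPDF r) from rfl,
    lintegral_withDensity_eq_lintegral_mul _ (hpdf r) hg]
  simp only [Pi.mul_apply, hdensity]
  rw [lintegral_const_mul _ (hpdf _), lintegral_exponentialPDF_eq_one hrb, mul_one]

lemma pi_expMeasure_setOf_forall_ne_lt (hrate : ∀ i, 0 < rate i) (j : ι) :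
    Measure.pi (fun i ↦ expMeasure (rate i)) {x | ∀ i, i ≠ j → x j < x i}
      = ENNReal.ofReal (rate j / ∑ i, rate i) := by
  classical
  have := fun i ↦ isProbabilityMeasure_expMeasure (hrate i)
  let p : ι → Prop := (· = j)
  let j' : Subtype p := ⟨j, rfl⟩
  set B : Set ((Subtype p → ℝ) × ({i // ¬p i} → ℝ)) := {uv | ∀ s, uv.1 j' < uv.2 s}
  have hB : MeasurableSet B := by
    simp only [B, ofPred_forall]
    exact .iInter fun s ↦ measurableSet_lt (by fun_prop) (by fun_prop)
  have hpre : {x : ι → ℝ | ∀ i, i ≠ j → x j < x i}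
      = MeasurableEquiv.piEquivPiSubtypeProd (fun _ ↦ ℝ) p ⁻¹' B := by
    ext x
    simp [B, p, j', MeasurableEquiv.piEquivPiSubtypeProd, Equiv.piEquivPiSubtypeProd]
  set b := ∑ s : {i // ¬p i}, rate s
  have hslice (u : Subtype p → ℝ) :
      Measure.pi (fun s : {i // ¬p i} ↦ expMeasure (rate s)) (Prod.mk u ⁻¹' B)
        = ENNReal.ofReal (rexp (-(b * max (u j') 0))) := by
    have : Prod.mk u ⁻¹' B = univ.pi fun _ ↦ Ioi (u j') := by ext v; simp [B]
    rw [this, Measure.pi_pi]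
    exact prod_expMeasure_Ioi (rate := fun s : {i // ¬p i} ↦ rate s) (fun s ↦ hrate s) _
  have hb : 0 ≤ b := Finset.sum_nonneg fun s _ ↦ (hrate s).le
  have hsum : rate j + b = ∑ i, rate i := by
    rw [← Finset.add_sum_erase _ _ (Finset.mem_univ j)]
    exact congrArg _ (Finset.sum_subtype _ (by simp [p]) rate).symm
  rw [hpre, (measurePreserving_piEquivPiSubtypeProd _ p).measure_preimage hB.nullMeasurableSet,
    Measure.prod_apply hB, lintegral_congr hslice, ← hsum,
    ← lintegral_exp_neg_mul_expMeasure (hrate j) hb]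
  convert (measurePreserving_eval (fun s : Subtype p ↦ expMeasure (rate s)) j').lintegral_comp
    (f := fun t : ℝ ↦ ENNReal.ofReal (rexp (-(b * max t 0)))) (by fun_prop)

lemma map_iInf_div_pi_expMeasure_one {κ : Type*} [Fintype κ] [Nonempty κ] {c : ℝ} (hc : 0 < c) :
    (Measure.pi fun _ : κ ↦ expMeasure 1).map (fun y ↦ (⨅ k, y k) / c)
      = expMeasure (Fintype.card κ * c) := by
  have hmin : Measurable fun y : κ → ℝ ↦ ⨅ k, y k := .iInf fun k ↦ measurable_pi_apply k
  rw [show (fun y : κ → ℝ ↦ (⨅ k, y k) / c) = (· / c) ∘ fun y ↦ ⨅ k, y k from rfl,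
    ← Measure.map_map (by fun_prop) hmin,
    map_iInf_pi_expMeasure fun _ ↦ one_pos,
    map_div_expMeasure (by simp [Fintype.card_pos]) hc]
  simp

lemma map_blockwise_iInf_div_pi_expMeasure_one {κ : Type*} [Fintype κ] [Nonempty κ] {c : ι → ℝ}
    (hc : ∀ i, 0 < c i) :
    (Measure.pi fun _ : ι × κ ↦ expMeasure 1).map (fun x i ↦ (⨅ k, x (i, k)) / c i)
      = Measure.pi fun i ↦ expMeasure (Fintype.card κ * c i) := by
  have := isProbabilityMeasure_expMeasure one_pos
  have hcurry : (Measure.pi fun _ : ι × κ ↦ expMeasure 1).map (MeasurableEquiv.curry ι κ ℝ)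
      = Measure.pi fun _ : ι ↦ Measure.pi fun _ : κ ↦ expMeasure 1 := by
    simpa only [Measure.infinitePi_eq_pi] using
      Measure.infinitePi_map_curry fun (_ : ι) (_ : κ) ↦ expMeasure 1
  have hblock (i : ι) : Measurable fun y : κ → ℝ ↦ (⨅ k, y k) / c i :=
    (Measurable.iInf fun k ↦ measurable_pi_apply k).div_const _
  calc (Measure.pi fun _ : ι × κ ↦ expMeasure 1).map (fun x i ↦ (⨅ k, x (i, k)) / c i)
      = ((Measure.pi fun _ : ι × κ ↦ expMeasure 1).map (MeasurableEquiv.curry ι κ ℝ)).map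
          (fun y i ↦ (⨅ k, y i k) / c i) := by
        rw [Measure.map_map (by fun_prop) (MeasurableEquiv.measurable _)]
        rfl
    _ = Measure.pi fun i ↦ expMeasure (Fintype.card κ * c i) := by
        rw [hcurry, Measure.pi_map_pi fun i ↦ (hblock i).aemeasurable]
        simp only [map_iInf_div_pi_expMeasure_one (hc _)]

lemma pi_expMeasure_one_setOf_blockwise_argmin {κ : Type*} [Fintype κ] [Nonempty κ]
    {c : ι → ℝ} (hc : ∀ i, 0 < c i) (hcsum : ∑ i, c i = 1) (j : ι) :
    Measure.pi (fun _ : ι × κ ↦ expMeasure 1)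
      {x | ∀ i, i ≠ j → (⨅ k, x (j, k)) / c j < (⨅ k, x (i, k)) / c i} = ENNReal.ofReal (c j) := by
  have hκ : (0 : ℝ) < Fintype.card κ := by exact_mod_cast Fintype.card_pos
  have hT : Measurable fun (x : ι × κ → ℝ) i ↦ (⨅ k, x (i, k)) / c i := by fun_prop
  rw [show {x : ι × κ → ℝ | ∀ i, i ≠ j → (⨅ k, x (j, k)) / c j < (⨅ k, x (i, k)) / c i}
      = (fun x i ↦ (⨅ k, x (i, k)) / c i) ⁻¹' {z | ∀ i, i ≠ j → z j < z i} from rfl,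
    ← Measure.map_apply hT (measurableSet_setOf_forall_ne_lt j),
    map_blockwise_iInf_div_pi_expMeasure_one hc,
    pi_expMeasure_setOf_forall_ne_lt fun i ↦ mul_pos hκ (hc i), ← Finset.mul_sum, hcsum, mul_one,
    mul_div_cancel_left₀ _ hκ.ne']

end Exponential

lemma eq_iff_forall_ne_lt_of_forall_ne_lt {ι β : Type*} [Preorder β] {f : ι → β} {y j : ι}
    (hy : ∀ i, i ≠ y → f y < f i) : y = j ↔ ∀ i, i ≠ j → f j < f i := by
  refine ⟨fun h ↦ h ▸ hy, fun hj ↦ ?_⟩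
  by_contra hne
  exact lt_asymm (hy j (Ne.symm hne)) (hj y hne)

theorem conditional_gls_target_marginal_general
    {Ω : Type*} [MeasurableSpace Ω] (μ : Measure Ω) [IsProbabilityMeasure μ]
    {α : Type*} [MeasurableSpace α] [MeasurableSingletonClass α]
    (N K : ℕ) (hK : 0 < K)
    (A : Ω → α) (hAmeas : Measurable A)
    (q : α → Fin N → ℝ) (hq : ∀ a i, 0 < q a i) (hqsum : ∀ a, ∑ i, q a i = 1)
    (S : Fin N → Fin K → Ω → ℝ) (hSmeas : ∀ i k, Measurable (S i k))
    (hSindep : iIndepFun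
      (fun ik : Fin N × Fin K => S ik.1 ik.2) μ)
    (hSexp : ∀ i k, μ.map (S i k) = expMeasure 1)
    -- `A` is independent of the family `{S i k}`
    (hAS : IndepFun A (fun ω => fun ik : Fin N × Fin K => S ik.1 ik.2 ω) μ)
    (Y : Ω → Fin N)
    -- `Y` is a.s. the unique argmin of `i ↦ (min_k S i k) / q (A ω) i`
    (hY : ∀ᵐ ω ∂μ, ∀ i : Fin N, i ≠ Y ω →
      (⨅ k : Fin K, S (Y ω) k ω) / q (A ω) (Y ω) < (⨅ k : Fin K, S i k ω) / q (A ω) i) :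
    ∀ (a : α) (j : Fin N), μ {ω | A ω = a} ≠ 0 →
      μ[|{ω | A ω = a}] {ω | Y ω = j} = ENNReal.ofReal (q a j) := by
  intro a j ha
  have : Nonempty (Fin K) := ⟨⟨0, hK⟩⟩
  set Φ : Ω → Fin N × Fin K → ℝ := fun ω ik ↦ S ik.1 ik.2 ω
  set W : Set (Fin N × Fin K → ℝ) :=
    {x | ∀ i, i ≠ j → (⨅ k, x (j, k)) / q a j < (⨅ k, x (i, k)) / q a i}
  set E : Set Ω := {ω | A ω = a}
  have hΦ : Measurable Φ := measurable_pi_lambda _ fun ik ↦ hSmeas ik.1 ik.2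
  have hW : MeasurableSet W := (measurableSet_setOf_forall_ne_lt j).preimage
    (f := fun (x : Fin N × Fin K → ℝ) i ↦ (⨅ k, x (i, k)) / q a i) (by fun_prop)
  have hlaw : μ.map Φ = Measure.pi fun _ ↦ expMeasure 1 := by
    rw [← funext fun ik : Fin N × Fin K ↦ hSexp ik.1 ik.2]
    exact hSindep.map_fun_eq_pi_map fun ik ↦ (hSmeas ik.1 ik.2).aemeasurable
  have hwin : μ (Φ ⁻¹' W) = ENNReal.ofReal (q a j) := by
    rw [← Measure.map_apply hΦ hW, hlaw]
    exact pi_expMeasure_one_setOf_blockwise_argmin (hq a) (hqsum a) j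
  have hindep : μ (E ∩ Φ ⁻¹' W) = μ E * μ (Φ ⁻¹' W) :=
    hAS.measure_inter_preimage_eq_mul _ _ (measurableSet_singleton a) hW
  have hevent : (E ∩ {ω | Y ω = j} : Set Ω) =ᵐ[μ] (E ∩ Φ ⁻¹' W : Set Ω) := by
    refine eventuallyEq_set.2 (hY.mono fun ω hω ↦ and_congr_right fun (hA : A ω = a) ↦ ?_)
    exact eq_iff_forall_ne_lt_of_forall_ne_lt (f := fun i ↦ (⨅ k, S i k ω) / q a i) (hA ▸ hω)
  have hE : MeasurableSet E := hAmeas (measurableSet_singleton a)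
  rw [cond_apply hE, measure_congr hevent, hindep, hwin,
    ← mul_assoc, ENNReal.inv_mul_cancel ha (measure_ne_top _ _), one_mul]

/-- **Conditional GLS samples the target correctly.**
Let `A` be a random variable with values in a countable alphabet, independent of the
i.i.d. `Exp(1)` family `S i k`, and for each value `a` let `q a` be a probability
mass function on `{1,…,N}` with `q a j > 0` for all `j`.  Let
`Y = argmin_i (min_k S i k) / q (A ·) i` (a.s. unique).  Then for every `a` with
`Pr[A = a] > 0` and every `j`, `Pr[Y = j | A = a] = q a j`. -/
theorem conditional_gls_target_marginal
    {Ω : Type*} [MeasurableSpace Ω] (μ : Measure Ω) [IsProbabilityMeasure μ]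
    {α : Type*} [MeasurableSpace α] [Countable α] [MeasurableSingletonClass α]
    (N K : ℕ) (hN : 0 < N) (hK : 0 < K)
    (A : Ω → α) (hAmeas : Measurable A)
    (q : α → Fin N → ℝ) (hq : ∀ a i, 0 < q a i) (hqsum : ∀ a, ∑ i, q a i = 1)
    (S : Fin N → Fin K → Ω → ℝ) (hSmeas : ∀ i k, Measurable (S i k))
    (hSindep : iIndepFun
      (fun ik : Fin N × Fin K => S ik.1 ik.2) μ)
    (hSexp : ∀ i k, μ.map (S i k) = expMeasure 1)
    -- `A` is independent of the family `{S i k}`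
    (hAS : IndepFun A (fun ω => fun ik : Fin N × Fin K => S ik.1 ik.2 ω) μ)
    (Y : Ω → Fin N) (hYmeas : Measurable Y)
    -- `Y` is a.s. the unique argmin of `i ↦ (min_k S i k) / q (A ω) i`
    (hY : ∀ᵐ ω ∂μ, ∀ i : Fin N, i ≠ Y ω →
      (⨅ k : Fin K, S (Y ω) k ω) / q (A ω) (Y ω) < (⨅ k : Fin K, S i k ω) / q (A ω) i) :
    ∀ (a : α) (j : Fin N), μ {ω | A ω = a} ≠ 0 →
      μ[|{ω | A ω = a}] {ω | Y ω = j} = ENNReal.ofReal (q a j) :=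
  conditional_gls_target_marginal_general μ N K hK A hAmeas q hq hqsum S hSmeas hSindep hSexp hAS Y
    hY
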